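/- Let ω ⊂ ℝ^d be a bounded open set that is Steiner symmetric about d hyperplanes H_1, …, H_d whose unit normals ν_1, …, ν_d are linearly independent. Then ω is connected (in fact path-connected) and contains its centre of mass. -/

import Mathlib

/-!
Projecting onto one of the hyperplanes `H_k` moves a point of `ω` along a segment inside `ω`, and
since Steiner symmetry makes `ω` invariant under the reflection in `H_k`, a ball inside `ω` is
carried to a ball inside `ω`. The normals form a basis, so the hyperplanes meet in a single point
`x₀`, and the composite of the `d` projections is an affine contraction towards `x₀` (its linear
part shrinks every vector, as a vector it fixes would be orthogonal to all normals). Iterating it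
from `y ∈ ω`, where `ball y r ⊆ ω`, eventually puts `x₀` into a ball of radius `r` inside `ω`,
which joins `y` to `x₀` within `ω`. Finally the reflections preserve `ω` and Lebesgue measure, so
`∫_ω (⟪x, ν_k⟫ - c_k) = 0` for every `k`: the centre of mass is `x₀`.
-/

open MeasureTheory Metric Filter Set
open scoped RealInnerProductSpace Topology ENNReal

/-- `ω` is Steiner symmetric about the hyperplane `{x | ⟪x, ν⟫ = c}` with unit normal `ν`:
every slice of `ω` along a line orthogonal to the hyperplane is an open segment centred on
the hyperplane. -/
def SteinerSymmAt {d : ℕ} (ω : Set (EuclideanSpace ℝ (Fin d)))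
    (ν : EuclideanSpace ℝ (Fin d)) (c : ℝ) : Prop :=
  ∃ L : EuclideanSpace ℝ (Fin d) → ℝ, (∀ z, 0 ≤ L z) ∧
    ∀ z, ⟪z, ν⟫ = c → ∀ t : ℝ, (z + t • ν ∈ ω ↔ |t| < L z / 2)

lemma exists_norm_le_mul_of_norm_lt {E F : Type*} [NormedAddCommGroup E] [NormedSpace ℝ E]
    [FiniteDimensional ℝ E] [NormedAddCommGroup F] [NormedSpace ℝ F] {f : E → F}
    (hf : Continuous f) (hsmul : ∀ (a : ℝ) v, f (a • v) = a • f v)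
    (hlt : ∀ v ≠ 0, ‖f v‖ < ‖v‖) : ∃ q, 0 ≤ q ∧ q < 1 ∧ ∀ v, ‖f v‖ ≤ q * ‖v‖ := by
  have hf0 : f 0 = 0 := by simpa using hsmul 0 0
  rcases subsingleton_or_nontrivial E with hE | hE
  · exact ⟨0, le_rfl, one_pos, fun v => by simp [Subsingleton.elim v 0, hf0]⟩
  obtain ⟨u, hu, hmax⟩ := (isCompact_sphere (0 : E) 1).exists_isMaxOn
    (NormedSpace.sphere_nonempty.2 zero_le_one) hf.norm.continuousOn
  have hu1 : ‖u‖ = 1 := mem_sphere_zero_iff_norm.1 hu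
  refine ⟨‖f u‖, norm_nonneg _, hu1 ▸ hlt u (norm_ne_zero_iff.1 (by simp [hu1])), fun v => ?_⟩
  rcases eq_or_ne v 0 with rfl | hv
  · simp [hf0]
  have hv' : 0 < ‖v‖ := norm_pos_iff.2 hv
  have hle : ‖f (‖v‖⁻¹ • v)‖ ≤ ‖f u‖ :=
    hmax (mem_sphere_zero_iff_norm.2 (by simp [norm_smul, hv'.ne']))
  rwa [hsmul, norm_smul, norm_inv, norm_norm, inv_mul_le_iff₀ hv', mul_comm] at hle

lemma joinedIn_of_ball_subset_of_dist_le_mul {E : Type*} [NormedAddCommGroup E]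
    [NormedSpace ℝ E] {ω : Set E} {F : E → E} {x₀ y : E} {q r : ℝ} (hq₀ : 0 ≤ q) (hq₁ : q < 1)
    (hjoin : ∀ y ∈ ω, JoinedIn ω y (F y)) (hball : ∀ y, ball y r ⊆ ω → ball (F y) r ⊆ ω)
    (hcontr : ∀ y, dist (F y) x₀ ≤ q * dist y x₀) (hr : 0 < r) (hy : ball y r ⊆ ω) :
    JoinedIn ω y x₀ := by
  have hdist : ∀ n, dist (F^[n] y) x₀ ≤ q ^ n * dist y x₀ := by
    intro n
    induction n with
    | zero => simp
    | succ n ih =>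
      rw [Function.iterate_succ_apply', pow_succ', mul_assoc]
      exact (hcontr _).trans (mul_le_mul_of_nonneg_left ih hq₀)
  have hiter : ∀ n, ball (F^[n] y) r ⊆ ω ∧ JoinedIn ω y (F^[n] y) := by
    intro n
    induction n with
    | zero => exact ⟨hy, JoinedIn.refl (hy (mem_ball_self hr))⟩
    | succ n ih =>
      rw [Function.iterate_succ_apply']
      exact ⟨hball _ ih.1, ih.2.trans (hjoin _ ih.2.target_mem)⟩
  obtain ⟨n, hn⟩ : ∃ n, q ^ n * dist y x₀ < r := by
    have := (tendsto_pow_atTop_nhds_zero_of_lt_one hq₀ hq₁).mul_const (dist y x₀)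
    rw [zero_mul] at this
    exact (this.eventually (gt_mem_nhds hr)).exists
  have hx₀ : x₀ ∈ ball (F^[n] y) r := mem_ball'.2 ((hdist n).trans_lt hn)
  exact (hiter n).2.trans <| JoinedIn.of_segment_subset <|
    ((convex_ball _ r).segment_subset (mem_ball_self hr) hx₀).trans (hiter n).1

lemma Module.Basis.exists_forall_inner_eq {E ι : Type*} [NormedAddCommGroup E]
    [InnerProductSpace ℝ E] [FiniteDimensional ℝ E] (b : Basis ι ℝ E) (c : ι → ℝ) :
    ∃ x, ∀ k, ⟪x, b k⟫ = c k :=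
  ⟨(InnerProductSpace.toDual ℝ E).symm (LinearMap.toContinuousLinearMap (b.constr ℝ c)),
    fun k => by simp [InnerProductSpace.toDual_symm_apply, b.constr_basis]⟩

lemma inner_setIntegral_id_eq {E : Type*} [NormedAddCommGroup E] [InnerProductSpace ℝ E]
    [CompleteSpace E] [MeasurableSpace E] {μ : Measure E} {s : Set E} {ν : E} {c : ℝ}
    (hint : IntegrableOn (fun x => x) s μ) (hfin : μ s ≠ ∞)
    (h : ∫ x in s, (⟪x, ν⟫ - c) ∂μ = 0) : ⟪∫ x in s, x ∂μ, ν⟫ = (μ s).toReal * c := by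
  rw [integral_sub (hint.inner_const ν) (integrableOn_const (C := c) hfin), setIntegral_const,
    smul_eq_mul, measureReal_def, sub_eq_zero] at h
  rw [← h, real_inner_comm, ← integral_inner hint]
  simp_rw [real_inner_comm]

section Hyperplane

variable {E : Type*} [NormedAddCommGroup E] [InnerProductSpace ℝ E]

-- Meant for a unit normal `ν`: the hyperplane is then `{x | ⟪x, ν⟫ = c}`.
def hyperplaneProj (ν : E) (c : ℝ) (x : E) : E := x - (⟪x, ν⟫ - c) • ν

noncomputable def hyperplaneReflection (ν : E) (c : ℝ) : E ≃ᵢ E :=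
  (ℝ ∙ ν)ᗮ.reflection.toIsometryEquiv.trans (IsometryEquiv.addRight ((2 * c) • ν))

variable {ν : E} {c : ℝ}

lemma hyperplaneProj_add_smul_self (ν : E) (c : ℝ) (x : E) :
    hyperplaneProj ν c x + (⟪x, ν⟫ - c) • ν = x :=
  sub_add_cancel _ _

lemma inner_hyperplaneProj (hν : ‖ν‖ = 1) (x : E) : ⟪hyperplaneProj ν c x, ν⟫ = c := by
  rw [hyperplaneProj, inner_sub_left, real_inner_smul_left, inner_self_eq_one_of_norm_eq_one hν]
  ring

lemma hyperplaneProj_add_smul (hν : ‖ν‖ = 1) (x : E) (a : ℝ) :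
    hyperplaneProj ν c (x + a • ν) = hyperplaneProj ν c x := by
  simp only [hyperplaneProj, inner_add_left, real_inner_smul_left,
    inner_self_eq_one_of_norm_eq_one hν]
  module

lemma hyperplaneProj_sub {x₀ : E} (hx₀ : ⟪x₀, ν⟫ = c) (y : E) :
    hyperplaneProj ν c y - x₀ = hyperplaneProj ν 0 (y - x₀) := by
  simp only [hyperplaneProj, inner_sub_left, hx₀, sub_zero]
  module

lemma hyperplaneProj_zero_smul (a : ℝ) (v : E) :
    hyperplaneProj ν 0 (a • v) = a • hyperplaneProj ν 0 v := by
  simp only [hyperplaneProj, sub_zero, real_inner_smul_left]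
  module

lemma continuous_hyperplaneProj (ν : E) (c : ℝ) : Continuous (hyperplaneProj ν c) := by
  unfold hyperplaneProj
  fun_prop

lemma norm_hyperplaneProj_zero_sq (hν : ‖ν‖ = 1) (v : E) :
    ‖hyperplaneProj ν 0 v‖ ^ 2 = ‖v‖ ^ 2 - ⟪v, ν⟫ ^ 2 := by
  rw [hyperplaneProj, sub_zero, norm_sub_sq_real, real_inner_smul_right, norm_smul, hν,
    Real.norm_eq_abs, mul_one, sq_abs]
  ring

lemma norm_hyperplaneProj_zero_le (hν : ‖ν‖ = 1) (v : E) : ‖hyperplaneProj ν 0 v‖ ≤ ‖v‖ := by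
  rw [← pow_le_pow_iff_left₀ (norm_nonneg _) (norm_nonneg _) two_ne_zero,
    norm_hyperplaneProj_zero_sq hν]
  linarith [sq_nonneg ⟪v, ν⟫]

lemma norm_hyperplaneProj_zero_lt (hν : ‖ν‖ = 1) {v : E} (hv : ⟪v, ν⟫ ≠ 0) :
    ‖hyperplaneProj ν 0 v‖ < ‖v‖ := by
  rw [← pow_lt_pow_iff_left₀ (norm_nonneg _) (norm_nonneg _) two_ne_zero,
    norm_hyperplaneProj_zero_sq hν]
  linarith [pow_pos (abs_pos.2 hv) 2, sq_abs ⟪v, ν⟫]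

lemma hyperplaneProj_zero_of_inner_eq_zero {v : E} (hv : ⟪v, ν⟫ = 0) :
    hyperplaneProj ν 0 v = v := by
  simp [hyperplaneProj, hv]

lemma hyperplaneReflection_apply (hν : ‖ν‖ = 1) (x : E) :
    hyperplaneReflection ν c x = x - (2 * (⟪x, ν⟫ - c)) • ν := by
  simp only [hyperplaneReflection, IsometryEquiv.trans_apply, IsometryEquiv.addRight_apply,
    LinearIsometryEquiv.coe_toIsometryEquiv, Submodule.reflection_orthogonal_apply,
    Submodule.reflection_singleton_apply, hν, real_inner_comm ν x]
  push_cast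
  match_scalars <;> ring

lemma hyperplaneReflection_hyperplaneReflection (hν : ‖ν‖ = 1) (x : E) :
    hyperplaneReflection ν c (hyperplaneReflection ν c x) = x := by
  simp only [hyperplaneReflection_apply hν, inner_sub_left, real_inner_smul_left,
    inner_self_eq_one_of_norm_eq_one hν]
  module

lemma measurePreserving_hyperplaneReflection [FiniteDimensional ℝ E] [MeasurableSpace E]
    [BorelSpace E] (ν : E) (c : ℝ) :
    MeasurePreserving (hyperplaneReflection ν c) volume volume :=
  (measurePreserving_add_right volume _).comp (LinearIsometryEquiv.measurePreserving _)

end Hyperplane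

section CyclicProj

variable {E : Type*} [NormedAddCommGroup E] [InnerProductSpace ℝ E] {ι : Type*}
  {ν : ι → E} {c : ι → ℝ}

def cyclicProj (ν : ι → E) (c : ι → ℝ) (l : List ι) (x : E) : E :=
  l.foldl (fun y k => hyperplaneProj (ν k) (c k) y) x

@[simp]
lemma cyclicProj_cons (k : ι) (l : List ι) (x : E) :
    cyclicProj ν c (k :: l) x = cyclicProj ν c l (hyperplaneProj (ν k) (c k) x) := rfl

lemma continuous_cyclicProj (ν : ι → E) (c : ι → ℝ) (l : List ι) :
    Continuous (cyclicProj ν c l) := by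
  induction l with
  | nil => exact continuous_id
  | cons k l ih => exact ih.comp (continuous_hyperplaneProj (ν k) (c k))

lemma cyclicProj_sub {x₀ : E} (hx₀ : ∀ k, ⟪x₀, ν k⟫ = c k) (l : List ι) (y : E) :
    cyclicProj ν c l y - x₀ = cyclicProj ν 0 l (y - x₀) := by
  induction l generalizing y with
  | nil => rfl
  | cons k l ih => rw [cyclicProj_cons, cyclicProj_cons, ih, hyperplaneProj_sub (hx₀ k)]; rfl

lemma cyclicProj_zero_smul (l : List ι) (a : ℝ) (v : E) :
    cyclicProj ν 0 l (a • v) = a • cyclicProj ν 0 l v := by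
  induction l generalizing v with
  | nil => rfl
  | cons k l ih =>
    rw [cyclicProj_cons, cyclicProj_cons, Pi.zero_apply, hyperplaneProj_zero_smul, ih]

lemma norm_cyclicProj_zero_le (hunit : ∀ k, ‖ν k‖ = 1) (l : List ι) (v : E) :
    ‖cyclicProj ν 0 l v‖ ≤ ‖v‖ := by
  induction l generalizing v with
  | nil => rfl
  | cons k l ih => exact (ih _).trans (norm_hyperplaneProj_zero_le (hunit k) v)

lemma norm_cyclicProj_zero_lt (hunit : ∀ k, ‖ν k‖ = 1) {l : List ι} {v : E}
    (hv : ∃ k ∈ l, ⟪v, ν k⟫ ≠ 0) : ‖cyclicProj ν 0 l v‖ < ‖v‖ := by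
  induction l generalizing v with
  | nil => simp at hv
  | cons k l ih =>
    rw [cyclicProj_cons, Pi.zero_apply]
    by_cases hk : ⟪v, ν k⟫ = 0
    · rw [hyperplaneProj_zero_of_inner_eq_zero hk]
      obtain ⟨k', hk', hvk'⟩ := hv
      exact ih ⟨k', (List.mem_cons.1 hk').resolve_left (by rintro rfl; exact hvk' hk), hvk'⟩
    · exact (norm_cyclicProj_zero_le hunit l _).trans_lt
        (norm_hyperplaneProj_zero_lt (hunit k) hk)

lemma exists_norm_cyclicProj_zero_le_mul [FiniteDimensional ℝ E] (hunit : ∀ k, ‖ν k‖ = 1)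
    {l : List ι} (hl : ∀ v : E, (∀ k ∈ l, ⟪v, ν k⟫ = 0) → v = 0) :
    ∃ q, 0 ≤ q ∧ q < 1 ∧ ∀ v, ‖cyclicProj ν 0 l v‖ ≤ q * ‖v‖ :=
  exists_norm_le_mul_of_norm_lt (continuous_cyclicProj ν 0 l) (cyclicProj_zero_smul l)
    fun v hv => norm_cyclicProj_zero_lt hunit <| by
      by_contra! hzero
      exact hv (hl v hzero)

end CyclicProj

section Steiner

variable {d : ℕ} {ω : Set (EuclideanSpace ℝ (Fin d))} {ν : EuclideanSpace ℝ (Fin d)} {c : ℝ}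

namespace SteinerSymmAt

lemma hyperplaneProj_add_smul_mem (h : SteinerSymmAt ω ν c) (hν : ‖ν‖ = 1) {x} (hx : x ∈ ω)
    {a : ℝ} (ha : |a| ≤ |⟪x, ν⟫ - c|) : hyperplaneProj ν c x + a • ν ∈ ω := by
  obtain ⟨L, -, hL⟩ := h
  have hz := inner_hyperplaneProj (c := c) hν x
  rw [← hyperplaneProj_add_smul_self ν c x, hL _ hz] at hx
  exact (hL _ hz a).2 (ha.trans_lt hx)

lemma mem_of_add_smul_mem (h : SteinerSymmAt ω ν c) (hν : ‖ν‖ = 1) {y} {a : ℝ}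
    (hy : y + a • ν ∈ ω) (ha : |⟪y, ν⟫ - c| ≤ |⟪y, ν⟫ - c + a|) : y ∈ ω := by
  have hsigned : ⟪y + a • ν, ν⟫ - c = ⟪y, ν⟫ - c + a := by
    rw [inner_add_left, real_inner_smul_left, inner_self_eq_one_of_norm_eq_one hν]; ring
  have := h.hyperplaneProj_add_smul_mem hν hy (a := ⟪y, ν⟫ - c) (hsigned ▸ ha)
  rwa [hyperplaneProj_add_smul hν, hyperplaneProj_add_smul_self] at this

lemma hyperplaneReflection_mem (h : SteinerSymmAt ω ν c) (hν : ‖ν‖ = 1) {x} (hx : x ∈ ω) :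
    hyperplaneReflection ν c x ∈ ω := by
  have hRx : hyperplaneReflection ν c x = hyperplaneProj ν c x + (-(⟪x, ν⟫ - c)) • ν := by
    rw [hyperplaneReflection_apply hν, hyperplaneProj]
    module
  rw [hRx]
  exact h.hyperplaneProj_add_smul_mem hν hx (abs_neg _).le

lemma preimage_hyperplaneReflection (h : SteinerSymmAt ω ν c) (hν : ‖ν‖ = 1) :
    hyperplaneReflection ν c ⁻¹' ω = ω := by
  refine Subset.antisymm (fun x hx => ?_) fun x hx => h.hyperplaneReflection_mem hν hx
  rw [← hyperplaneReflection_hyperplaneReflection (c := c) hν x]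
  exact h.hyperplaneReflection_mem hν hx

lemma joinedIn_hyperplaneProj (h : SteinerSymmAt ω ν c) (hν : ‖ν‖ = 1) {x} (hx : x ∈ ω) :
    JoinedIn ω x (hyperplaneProj ν c x) := by
  refine JoinedIn.of_segment_subset ?_
  rw [segment_eq_image]
  rintro _ ⟨θ, hθ, rfl⟩
  have hpt : (1 - θ) • x + θ • hyperplaneProj ν c x
      = hyperplaneProj ν c x + ((1 - θ) * (⟪x, ν⟫ - c)) • ν := by
    simp only [hyperplaneProj]
    module
  dsimp only
  rw [hpt]
  refine h.hyperplaneProj_add_smul_mem hν hx ?_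
  rw [abs_mul]
  exact mul_le_of_le_one_left (abs_nonneg _) (abs_le.2 ⟨by linarith [hθ.2], by linarith [hθ.1]⟩)

lemma ball_hyperplaneProj_subset (h : SteinerSymmAt ω ν c) (hν : ‖ν‖ = 1) {x} {r : ℝ}
    (hball : ball x r ⊆ ω) : ball (hyperplaneProj ν c x) r ⊆ ω := by
  intro y hy
  set R := hyperplaneReflection ν c
  set t := ⟪x, ν⟫ - c
  have hplus : y + t • ν ∈ ω := hball <| by
    rw [mem_ball, dist_eq_norm]
    convert mem_ball_iff_norm.1 hy using 2
    rw [hyperplaneProj]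
    module
  -- `ω` is invariant under the reflection `R`, which maps `y - t • ν` into `ball x r`.
  have hminus : y + (-t) • ν ∈ ω := by
    rw [← h.preimage_hyperplaneReflection hν, mem_preimage]
    refine hball ?_
    calc dist (R (y + (-t) • ν)) x = dist (R (y + (-t) • ν)) (R (R x)) := by
          rw [hyperplaneReflection_hyperplaneReflection hν]
    _ = ‖y - hyperplaneProj ν c x‖ := by
          rw [R.dist_eq, hyperplaneReflection_apply hν x, dist_eq_norm, hyperplaneProj]
          congr 1
          module
    _ < r := mem_ball_iff_norm.1 hy
  set s := ⟪y, ν⟫ - c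
  have htwo : 2 * |s| ≤ |s + t| + |s + -t| := by
    calc 2 * |s| = |(s + t) + (s + -t)| := by rw [← abs_two, ← abs_mul]; ring_nf
    _ ≤ |s + t| + |s + -t| := abs_add_le _ _
  by_cases hs : |s| ≤ |s + t|
  · exact h.mem_of_add_smul_mem hν hplus hs
  · exact h.mem_of_add_smul_mem hν hminus (by linarith)

lemma setIntegral_inner_sub_eq_zero (h : SteinerSymmAt ω ν c) (hν : ‖ν‖ = 1) :
    ∫ x in ω, (⟪x, ν⟫ - c) = 0 := by
  have hR : ∀ x, ⟪hyperplaneReflection ν c x, ν⟫ - c = -(⟪x, ν⟫ - c) := fun x => by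
    rw [hyperplaneReflection_apply hν, inner_sub_left, real_inner_smul_left,
      inner_self_eq_one_of_norm_eq_one hν]
    ring
  have hsymm := (measurePreserving_hyperplaneReflection ν c).setIntegral_preimage_emb
    (hyperplaneReflection ν c).toHomeomorph.measurableEmbedding (fun x => ⟪x, ν⟫ - c) ω
  simp only [h.preimage_hyperplaneReflection hν, hR, integral_neg] at hsymm
  linarith

end SteinerSymmAt

variable {ν : Fin d → EuclideanSpace ℝ (Fin d)} {c : Fin d → ℝ}

lemma joinedIn_cyclicProj (hsym : ∀ k, SteinerSymmAt ω (ν k) (c k)) (hunit : ∀ k, ‖ν k‖ = 1)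
    (l : List (Fin d)) {y} (hy : y ∈ ω) : JoinedIn ω y (cyclicProj ν c l y) := by
  induction l generalizing y with
  | nil => exact JoinedIn.refl hy
  | cons k l ih =>
    have hk := (hsym k).joinedIn_hyperplaneProj (hunit k) hy
    exact hk.trans (ih hk.target_mem)

lemma ball_cyclicProj_subset (hsym : ∀ k, SteinerSymmAt ω (ν k) (c k))
    (hunit : ∀ k, ‖ν k‖ = 1) (l : List (Fin d)) {y} {r : ℝ} (hball : ball y r ⊆ ω) :
    ball (cyclicProj ν c l y) r ⊆ ω := by
  induction l generalizing y with
  | nil => exact hball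
  | cons k l ih => exact ih ((hsym k).ball_hyperplaneProj_subset (hunit k) hball)

end Steiner

/-- A nonempty bounded open set in `ℝ^d`, Steiner symmetric about `d` hyperplanes whose unit
normals are linearly independent, is (path-)connected and contains its centre of mass. -/
theorem stmt2 {d : ℕ} (ω : Set (EuclideanSpace ℝ (Fin d))) (hopen : IsOpen ω)
    (hbdd : Bornology.IsBounded ω) (hne : ω.Nonempty)
    (ν : Fin d → EuclideanSpace ℝ (Fin d)) (c : Fin d → ℝ)
    (hunit : ∀ k, ‖ν k‖ = 1) (hli : LinearIndependent ℝ ν)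
    (hsym : ∀ k, SteinerSymmAt ω (ν k) (c k)) :
    IsPathConnected ω ∧ (volume ω).toReal⁻¹ • (∫ x in ω, x) ∈ ω := by
  set b := basisOfLinearIndependentOfCardEqFinrank' ν hli (by simp)
  have hb : ⇑b = ν := coe_basisOfLinearIndependentOfCardEqFinrank' ..
  obtain ⟨x₀, hx₀⟩ := b.exists_forall_inner_eq c
  rw [hb] at hx₀
  obtain ⟨q, hq₀, hq₁, hq⟩ := exists_norm_cyclicProj_zero_le_mul hunit (l := List.finRange d)
    fun v hv => InnerProductSpace.ext_inner_right_basis b fun k => by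
      simp [hb, hv k (List.mem_finRange k)]
  have hjoin : ∀ y ∈ ω, JoinedIn ω y x₀ := fun y hy => by
    obtain ⟨r, hr, hball⟩ := Metric.isOpen_iff.1 hopen y hy
    refine joinedIn_of_ball_subset_of_dist_le_mul hq₀ hq₁
      (fun y => joinedIn_cyclicProj hsym hunit (List.finRange d))
      (fun y => ball_cyclicProj_subset hsym hunit (List.finRange d)) (fun y => ?_) hr hball
    rw [dist_eq_norm, dist_eq_norm, cyclicProj_sub hx₀]
    exact hq _
  obtain ⟨y, hy⟩ := hne
  have hx₀ω : x₀ ∈ ω := (hjoin y hy).target_mem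
  refine ⟨⟨x₀, hx₀ω, fun y hy => (hjoin y hy).symm⟩, ?_⟩
  have hfin : volume ω ≠ ∞ := hbdd.measure_lt_top.ne
  have hint : IntegrableOn (fun x => x) ω volume :=
    (continuous_id.continuousOn.integrableOn_compact hbdd.isCompact_closure).mono_set
      subset_closure
  have hbary : ∫ x in ω, x = (volume ω).toReal • x₀ :=
    InnerProductSpace.ext_inner_right_basis b fun k => by
      rw [hb, inner_setIntegral_id_eq hint hfin ((hsym k).setIntegral_inner_sub_eq_zero (hunit k)),
        real_inner_smul_left, hx₀]
  have hvol : (volume ω).toReal ≠ 0 :=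
    (ENNReal.toReal_pos (hopen.measure_pos volume ⟨y, hy⟩).ne' hfin).ne'
  rwa [hbary, inv_smul_smul₀ hvol]
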